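/- arXiv:1910.12576 — 2 statements merged into one kernel-verified Lean document; each statement's English description precedes it below -/
import Mathlib

section
/- Let k and β be positive integers. Let W be the set of continuous (4kβ)-symplectic Gelfand–Tsetlin patterns λ⁽¹⁾ ≺ ⋯ ≺ λ⁽⁴ᵏᵝ⁾ with top row λ⁽⁴ᵏᵝ⁾ = ⟨1^{2kβ}⟩ that satisfy, for every i = 1,…,k (with λ⁽⁰⁾ ≡ 0): Σ_{j=(2i−2)β+1}^{(2i−1)β} [ Σ_{l=1}^{j} λ⁽²ʲ⁾_l − 2 Σ_{l=1}^{j} λ⁽²ʲ⁻¹⁾_l + Σ_{l=1}^{j−1} λ⁽²ʲ⁻²⁾_l ] = Σ_{j=(2i−1)β+1}^{2iβ} [ Σ_{l=1}^{j} λ⁽²ʲ⁾_l − 2 Σ_{l=1}^{j} λ⁽²ʲ⁻¹⁾_l + Σ_{l=1}^{j−1} λ⁽²ʲ⁻²⁾_l ], each pattern being identified with the vector of all entries of its rows 1,…,4kβ−1, a point of ℝ^{4k²β²}. Then W has positive (kβ(2kβ+1)−k)-dimensional Hausdorff measure. -/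
noncomputable section
open MeasureTheory

/-- `rowLen r = ⌈r/2⌉`, the length of row `r` of a half Gelfand–Tsetlin pattern. -/
def rowLen (r : ℕ) : ℕ := (r + 1) / 2

/-- Index type for the entries of rows `1,…,m` of a half Gelfand–Tsetlin pattern:
the row `r = i+1` (for `i : Fin m`) has `⌈r/2⌉ = (i+2)/2` entries. -/
abbrev GTIdx (m : ℕ) := Σ i : Fin m, Fin ((i.1 + 2) / 2)

/-- The `(r,l)` entry (1-based) encoded by a point `f : GTIdx m → ℝ`, and `0` out of range. -/
def gtEnt {m : ℕ} (f : GTIdx m → ℝ) (r l : ℕ) : ℝ :=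
  if h : 1 ≤ r ∧ r ≤ m ∧ 1 ≤ l ∧ l ≤ (r + 1) / 2 then
    f ⟨⟨r - 1, by omega⟩, ⟨l - 1, show l - 1 < (r - 1 + 2) / 2 by omega⟩⟩
  else 0

/-- The entries of a continuous `(4kβ)`-symplectic Gelfand–Tsetlin pattern whose rows
`1,…,4kβ−1` are encoded by `f` and whose top row `4kβ` is fixed to be `⟨1^{2kβ}⟩`. -/
def spEnt (k β : ℕ) (f : GTIdx (4*k*β-1) → ℝ) (r l : ℕ) : ℝ :=
  if r = 4*k*β then (if 1 ≤ l ∧ l ≤ 2*k*β then 1 else 0) else gtEnt f r l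

/-- The summand `Σ_{l=1}^{j} λ^{(2j)}_l − 2 Σ_{l=1}^{j} λ^{(2j−1)}_l + Σ_{l=1}^{j−1} λ^{(2j−2)}_l`
of the symplectic constraints, for an entry function `e` (row `0` is identically `0`, in
accordance with the convention `λ^{(0)} ≡ 0`). -/
def spRowTermR (e : ℕ → ℕ → ℝ) (j : ℕ) : ℝ :=
  (∑ l ∈ Finset.Icc 1 j, e (2*j) l) - 2 * (∑ l ∈ Finset.Icc 1 j, e (2*j-1) l)
    + (∑ l ∈ Finset.Icc 1 (j-1), e (2*j-2) l)

/-- The set of continuous `(4kβ)`-symplectic Gelfand–Tsetlin patterns (nonnegative entries,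
non-increasing rows, interlacing consecutive rows) with top row `⟨1^{2kβ}⟩` satisfying the
`k` symplectic constraints, identified with the vectors of the entries of rows `1,…,4kβ−1`
(a subset of `ℝ^{4k²β²}`). -/
def SpContPatterns (k β : ℕ) : Set (GTIdx (4*k*β-1) → ℝ) :=
  {f | (∀ r l, 1 ≤ r → r ≤ 4*k*β → 1 ≤ l → l ≤ rowLen r → 0 ≤ spEnt k β f r l) ∧
       (∀ r l, 1 ≤ r → r ≤ 4*k*β → 1 ≤ l → l + 1 ≤ rowLen r →
         spEnt k β f r (l+1) ≤ spEnt k β f r l) ∧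
       (∀ r l, 1 ≤ r → r + 1 ≤ 4*k*β → 1 ≤ l → l ≤ rowLen r →
         spEnt k β f r l ≤ spEnt k β f (r+1) l) ∧
       (∀ r l, 1 ≤ r → r + 1 ≤ 4*k*β → 1 ≤ l → l ≤ rowLen r → l + 1 ≤ rowLen (r+1) →
         spEnt k β f (r+1) (l+1) ≤ spEnt k β f r l) ∧
       (∀ i, 1 ≤ i → i ≤ k →
         ∑ j ∈ Finset.Icc ((2*i-2)*β+1) ((2*i-1)*β), spRowTermR (spEnt k β f) j
           = ∑ j ∈ Finset.Icc ((2*i-1)*β+1) (2*i*β), spRowTermR (spEnt k β f) j)}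

/-!
Interlacing with the top row `⟨1^n⟩`, `n = 2kβ`, forces every entry `λ⁽ʳ⁾_l` with `r ≥ n + l`
to equal `1`; the other `n(n+1)/2 = kβ(2kβ+1)` entries are free. The base pattern with free
entries `1 - (2l + n - r)/(n + 2)` satisfies every interlacing inequality involving a free entry
with margin `1/(n + 2)`, and all its row terms `spRowTermR` vanish, so it satisfies the `k`
constraints. Hence the base pattern plus any perturbation of the free entries of sup norm
`< 1/(4(n + 2))` in the kernel of the `k` linear constraint functionals lies in the set. That
kernel has dimension at least `kβ(2kβ+1) - k`, and a relatively open piece of an affine subspace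
of dimension `m` has positive `m`-dimensional Hausdorff measure, since a Lipschitz left inverse of
its parametrisation maps it onto an open subset of `ℝ^m`.
-/

section HausdorffMeasure

theorem hausdorffMeasure_pos_of_lipschitzWith_image {X : Type*} [EMetricSpace X]
    [MeasurableSpace X] [BorelSpace X] {ι : Type*} [Fintype ι] {K : NNReal}
    {g : X → ι → ℝ} (hg : LipschitzWith K g) {s : Set X} (hs : 0 < volume (g '' s)) :
    0 < μH[Fintype.card ι] s := by
  refine pos_iff_ne_zero.2 fun h => hs.ne' (le_antisymm ?_ bot_le)
  calc volume (g '' s) = μH[Fintype.card ι] (g '' s) := by rw [hausdorffMeasure_pi_real]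
    _ ≤ K ^ (Fintype.card ι : ℝ) * μH[Fintype.card ι] s :=
      hg.hausdorffMeasure_image_le (Nat.cast_nonneg _) s
    _ = 0 := by rw [h, mul_zero]

variable {X : Type*} [NormedAddCommGroup X] [NormedSpace ℝ X] [FiniteDimensional ℝ X]
  [MeasurableSpace X] [BorelSpace X]

theorem hausdorffMeasure_pos_of_injective_linearMap {m : ℕ} {φ : (Fin m → ℝ) →ₗ[ℝ] X}
    (hφ : Function.Injective φ) {W : Set X} (p : X) {ε : ℝ} (hε : 0 < ε)
    (hW : ∀ v, ‖φ v‖ < ε → p + φ v ∈ W) : 0 < μH[m] W := by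
  obtain ⟨ψ, hψ⟩ := φ.exists_leftInverse_of_injective (LinearMap.ker_eq_bot.2 hφ)
  let g : X → Fin m → ℝ := fun x => ψ x - ψ p
  have hg : LipschitzWith (‖LinearMap.toContinuousLinearMap ψ‖₊ + 0) g :=
    (LinearMap.toContinuousLinearMap ψ).lipschitz.sub (LipschitzWith.const _)
  let U : Set (Fin m → ℝ) := φ ⁻¹' Metric.ball 0 ε
  have hU : IsOpen U := Metric.isOpen_ball.preimage (LinearMap.continuous_of_finiteDimensional φ)
  have hUg : U ⊆ g '' W := fun v hv =>
    ⟨p + φ v, hW v (by simpa [U] using hv), by simp [g, ← LinearMap.comp_apply, hψ]⟩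
  simpa using hausdorffMeasure_pos_of_lipschitzWith_image hg
    ((hU.measure_pos volume ⟨0, by simpa [U] using hε⟩).trans_le (measure_mono hUg))

theorem hausdorffMeasure_pos_of_affine_piece {Y : Type*} [AddCommGroup Y] [Module ℝ Y]
    [FiniteDimensional ℝ Y] {φ : Y →ₗ[ℝ] X} (hφ : Function.Injective φ) {d : ℕ}
    (hd : d ≤ Module.finrank ℝ Y) {W : Set X} (p : X) {ε : ℝ} (hε : 0 < ε)
    (hW : ∀ y, ‖φ y‖ < ε → p + φ y ∈ W) : 0 < μH[d] W := by
  let e := (Module.finBasis ℝ Y).equivFun.symm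
  have h := hausdorffMeasure_pos_of_injective_linearMap (φ := φ ∘ₗ e.toLinearMap)
    (hφ.comp e.injective) p hε fun v hv => hW (e v) hv
  exact h.trans_le (Measure.hausdorffMeasure_mono (by exact_mod_cast hd) W)

end HausdorffMeasure

theorem card_sub_le_finrank_ker {ι : Type*} [Fintype ι] {k : ℕ}
    (f : (ι → ℝ) →ₗ[ℝ] (Fin k → ℝ)) :
    Fintype.card ι - k ≤ Module.finrank ℝ (LinearMap.ker f) := by
  have := f.finrank_range_add_finrank_ker
  have := (LinearMap.range f).finrank_le
  simp only [Module.finrank_fintype_fun_eq_card, Fintype.card_fin] at *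
  omega

theorem le_of_abs_sub_le_quarter {c a b : ℝ} {p q : ℕ} (hc : 0 < c)
    (ha : |a - (1 - p * c)| ≤ c / 4) (hb : |b - (1 - q * c)| ≤ c / 4) (hpq : q + 1 ≤ p) :
    a ≤ b := by
  have : (q + 1 : ℝ) * c ≤ p * c := mul_le_mul_of_nonneg_right (by exact_mod_cast hpq) hc.le
  rw [abs_le] at ha hb
  linarith

theorem gtEnt_add {m : ℕ} (f g : GTIdx m → ℝ) : gtEnt (f + g) = gtEnt f + gtEnt g := by
  ext r l; simp only [gtEnt, Pi.add_apply]; split_ifs <;> simp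

theorem gtEnt_smul {m : ℕ} (a : ℝ) (f : GTIdx m → ℝ) : gtEnt (a • f) = a • gtEnt f := by
  ext r l; simp only [gtEnt, Pi.smul_apply]; split_ifs <;> simp

theorem abs_gtEnt_le {m : ℕ} {w : GTIdx m → ℝ} {δ : ℝ} (hδ : 0 ≤ δ) (hw : ∀ x, |w x| ≤ δ)
    (r l : ℕ) : |gtEnt w r l| ≤ δ := by
  unfold gtEnt; split
  · exact hw _
  · simpa using hδ

theorem spEnt_add (k β : ℕ) (f w : GTIdx (4*k*β-1) → ℝ) :
    spEnt k β (f + w) = spEnt k β f + gtEnt w := by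
  ext r l
  by_cases h : r = 4*k*β
  · subst h
    have : gtEnt w (4*k*β) l = 0 := dif_neg (by omega)
    simp [spEnt, this]
  · simp [spEnt, gtEnt_add, h]

theorem spRowTermR_add (e e' : ℕ → ℕ → ℝ) (j : ℕ) :
    spRowTermR (e + e') j = spRowTermR e j + spRowTermR e' j := by
  simp only [spRowTermR, Pi.add_apply, Finset.sum_add_distrib]
  ring

theorem spRowTermR_smul (a : ℝ) (e : ℕ → ℕ → ℝ) (j : ℕ) :
    spRowTermR (a • e) j = a * spRowTermR e j := by
  simp only [spRowTermR, Pi.smul_apply, smul_eq_mul, ← Finset.mul_sum]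
  ring

theorem spRowTermR_congr {e e' : ℕ → ℕ → ℝ} {j : ℕ}
    (h : ∀ r l, 1 ≤ r → r ≤ 2 * j → 1 ≤ l → l ≤ rowLen r → e r l = e' r l) :
    spRowTermR e j = spRowTermR e' j := by
  have hrow : ∀ r L, r ≤ 2 * j → L ≤ rowLen r →
      ∑ l ∈ Finset.Icc 1 L, e r l = ∑ l ∈ Finset.Icc 1 L, e' r l := by
    intro r L hr hL
    refine Finset.sum_congr rfl fun l hl => ?_
    rw [Finset.mem_Icc] at hl
    exact h r l (by unfold rowLen at hL; omega) hr hl.1 (hl.2.trans hL)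
  unfold spRowTermR
  rw [hrow (2 * j) j le_rfl (by unfold rowLen; omega), hrow (2 * j - 1) j (by omega)
    (by unfold rowLen; omega), hrow (2 * j - 2) (j - 1) (by omega) (by unfold rowLen; omega)]

namespace SpContPatterns

/-- `x` is the entry `(r, l) = (x.1 + 1, x.2 + 1)`; the entries with `r ≥ n + l` are forced to `1`
by interlacing with a top row `⟨1^n⟩`. -/
def IsFree (n : ℕ) {m : ℕ} (x : GTIdx m) : Prop := x.1.1 < n + x.2.1

instance (n m : ℕ) : DecidablePred (IsFree n : GTIdx m → Prop) :=
  fun x => inferInstanceAs (Decidable (x.1.1 < n + x.2.1))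

def isFreeEquiv {n m : ℕ} (hm : m = 2 * n - 1) :
    {x : GTIdx m // IsFree n x} ≃ Σ b : Fin n, Fin (b + 1) where
  toFun x := ⟨⟨x.1.1 - x.1.2, by have := x.2; simp only [IsFree] at this; omega⟩,
    ⟨x.1.2, show x.1.2.1 < x.1.1 - x.1.2 + 1 by have := x.1.2.2; omega⟩⟩
  invFun y := ⟨⟨⟨y.2 + y.1, by have := y.1.2; have := y.2.2; omega⟩,
    ⟨y.2, show y.2.1 < (y.2 + y.1 + 2) / 2 by have := y.2.2; omega⟩⟩,
    show y.2.1 + y.1.1 < n + y.2.1 by have := y.1.2; omega⟩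
  left_inv := by
    rintro ⟨⟨⟨i, hi⟩, ⟨l, hl⟩⟩, hx⟩
    have hli : l + (i - l) = i := by simp only at hl; omega
    exact Subtype.ext (Sigma.ext (Fin.ext hli)
      ((Fin.heq_ext_iff (congrArg (fun t => (t + 2) / 2) hli)).2 rfl))
  right_inv := by
    rintro ⟨⟨b, hb⟩, ⟨a, ha⟩⟩
    have hab : a + b - a = b := by omega
    exact Sigma.ext (Fin.ext hab) ((Fin.heq_ext_iff (congrArg (· + 1) hab)).2 rfl)

theorem card_isFree {n m : ℕ} (hm : m = 2 * n - 1) :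
    Fintype.card {x : GTIdx m // IsFree n x} = n * (n + 1) / 2 := by
  rw [Fintype.card_congr (isFreeEquiv hm), Fintype.card_sigma]
  simpa [Fin.sum_univ_eq_sum_range (· + 1), Finset.sum_range_succ', mul_comm] using
    Finset.sum_range_id (n + 1)

theorem gtEnt_eq_zero_of_add_le {n m : ℕ} {w : GTIdx m → ℝ} (hw : ∀ x, ¬IsFree n x → w x = 0)
    {r l : ℕ} (hl : 1 ≤ l) (hrl : n + l ≤ r) : gtEnt w r l = 0 := by
  unfold gtEnt; split
  · exact hw _ (by simp only [IsFree]; omega)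
  · rfl

def height (n r l : ℕ) : ℕ := if r < n + l then 2 * l + n - r else 0

/-- The slope `1 / (n + 2)` is what makes every row term `spRowTermR (baseEntry n) j` vanish. -/
def baseEntry (n r l : ℕ) : ℝ := 1 - height n r l * ((n : ℝ) + 2)⁻¹

theorem sum_height {n r L : ℕ} (hL : r - n ≤ L) :
    ∑ l ∈ Finset.Icc 1 L, (height n r l : ℝ) = L * (L + 1 + n - r) - (r - n : ℕ) := by
  induction L, hL using Nat.le_induction with
  | base =>
    rw [Finset.sum_eq_zero fun l hl => by
      simp only [Finset.mem_Icc] at hl; simp only [height]; rw [if_neg (by omega)]; simp]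
    rcases le_total r n with h | h
    · simp [Nat.sub_eq_zero_of_le h]
    · push_cast [Nat.cast_sub h]; ring
  | succ L hL ih =>
    rw [Finset.sum_Icc_succ_top (by omega), ih, height, if_pos (by omega),
      Nat.cast_sub (show r ≤ 2 * (L + 1) + n by omega)]
    push_cast; ring

theorem spRowTermR_baseEntry {n j : ℕ} (hn : Even n) (hj : 1 ≤ j) (hjn : j ≤ n) :
    spRowTermR (baseEntry n) j = 0 := by
  have hsum : ∀ r L, r - n ≤ L → ∑ l ∈ Finset.Icc 1 L, baseEntry n r l
      = L - (L * (L + 1 + n - r) - (r - n : ℕ)) * ((n : ℝ) + 2)⁻¹ := by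
    intro r L hL
    simp only [baseEntry, Finset.sum_sub_distrib, ← Finset.sum_mul, sum_height hL]
    simp
  -- `r ↦ (r - n : ℕ)` is affine on either side of `r = n`, and `n` is even, so the rows
  -- `2j - 2, 2j - 1, 2j` never straddle the kink.
  have hkink : ((2 * j - n : ℕ) : ℝ) - 2 * (2 * j - 1 - n : ℕ) + (2 * j - 2 - n : ℕ) = 0 := by
    obtain ⟨N, rfl⟩ := hn
    rcases le_or_gt j N with h | h
    · simp [Nat.sub_eq_zero_of_le (show 2 * j ≤ N + N by omega),
        Nat.sub_eq_zero_of_le (show 2 * j - 1 ≤ N + N by omega),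
        Nat.sub_eq_zero_of_le (show 2 * j - 2 ≤ N + N by omega)]
    · rw [Nat.cast_sub (by omega), Nat.cast_sub (by omega), Nat.cast_sub (by omega),
        Nat.cast_sub (by omega), Nat.cast_sub (by omega)]
      push_cast; ring
  rw [spRowTermR, hsum _ _ (by omega), hsum _ _ (by omega), hsum _ _ (by omega),
    Nat.cast_sub (show 1 ≤ 2 * j by omega), Nat.cast_sub (show 2 ≤ 2 * j by omega),
    Nat.cast_sub hj]
  have : ((n : ℝ) + 2)⁻¹ * (n + 2) = 1 := inv_mul_cancel₀ (by positivity)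
  push_cast
  linear_combination (n + 2 : ℝ)⁻¹ * hkink + this

def IsNearBase (n : ℕ) (e : ℕ → ℕ → ℝ) : Prop :=
  ∀ r l, 1 ≤ r → r ≤ 2 * n → 1 ≤ l → l ≤ rowLen r →
    |e r l - baseEntry n r l| ≤ ((n : ℝ) + 2)⁻¹ / 4 ∧ (n + l ≤ r → e r l = 1)

namespace IsNearBase

variable {n : ℕ} {e : ℕ → ℕ → ℝ} {r l : ℕ}

theorem nonneg (he : IsNearBase n e) (hr : 1 ≤ r) (hr' : r ≤ 2 * n) (hl : 1 ≤ l)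
    (hl' : l ≤ rowLen r) : 0 ≤ e r l := by
  have hc : 0 < ((n : ℝ) + 2)⁻¹ := by positivity
  have hcn : ((n : ℝ) + 2) * ((n : ℝ) + 2)⁻¹ = 1 := mul_inv_cancel₀ (by positivity)
  have hh : height n r l ≤ n + 1 := by unfold height rowLen at *; split_ifs <;> omega
  have : (height n r l : ℝ) * ((n : ℝ) + 2)⁻¹ ≤ (n + 1) * ((n : ℝ) + 2)⁻¹ :=
    mul_le_mul_of_nonneg_right (by exact_mod_cast hh) hc.le
  have hnear := (he r l hr hr' hl hl').1
  rw [baseEntry, abs_le] at hnear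
  linarith

theorem antitone_row (he : IsNearBase n e) (hr : 1 ≤ r) (hr' : r ≤ 2 * n) (hl : 1 ≤ l)
    (hl' : l + 1 ≤ rowLen r) : e r (l + 1) ≤ e r l := by
  by_cases hfree : r < n + l + 1
  · exact le_of_abs_sub_le_quarter (by positivity) (he r (l + 1) hr hr' (by omega) hl').1
      (he r l hr hr' hl (by omega)).1 (by unfold height; split_ifs <;> omega)
  · rw [(he r (l + 1) hr hr' (by omega) hl').2 (by omega),
      (he r l hr hr' hl (by omega)).2 (by omega)]

theorem le_succ_row (he : IsNearBase n e) (hr : 1 ≤ r) (hr' : r + 1 ≤ 2 * n) (hl : 1 ≤ l)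
    (hl' : l ≤ rowLen r) : e r l ≤ e (r + 1) l := by
  have hl'' : l ≤ rowLen (r + 1) := by unfold rowLen at *; omega
  by_cases hfree : r < n + l
  · exact le_of_abs_sub_le_quarter (by positivity) (he r l hr (by omega) hl hl').1
      (he (r + 1) l (by omega) hr' hl hl'').1 (by unfold height; split_ifs <;> omega)
  · rw [(he r l hr (by omega) hl hl').2 (by omega),
      (he (r + 1) l (by omega) hr' hl hl'').2 (by omega)]

theorem succ_succ_le (he : IsNearBase n e) (hr : 1 ≤ r) (hr' : r + 1 ≤ 2 * n) (hl : 1 ≤ l)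
    (hl' : l ≤ rowLen r) (hl'' : l + 1 ≤ rowLen (r + 1)) : e (r + 1) (l + 1) ≤ e r l := by
  by_cases hfree : r < n + l
  · exact le_of_abs_sub_le_quarter (by positivity)
      (he (r + 1) (l + 1) (by omega) hr' (by omega) hl'').1
      (he r l hr (by omega) hl hl').1 (by unfold height; split_ifs <;> omega)
  · rw [(he r l hr (by omega) hl hl').2 (by omega),
      (he (r + 1) (l + 1) (by omega) hr' (by omega) hl'').2 (by omega)]

end IsNearBase

def basePt (k β : ℕ) : GTIdx (4*k*β-1) → ℝ := fun x => baseEntry (2*k*β) (x.1 + 1) (x.2 + 1)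

theorem spEnt_basePt {k β r l : ℕ} (hr : 1 ≤ r) (hr' : r ≤ 4*k*β) (hl : 1 ≤ l)
    (hl' : l ≤ rowLen r) : spEnt k β (basePt k β) r l = baseEntry (2*k*β) r l := by
  have : 4*k*β = 2*(2*k*β) := by ring
  unfold spEnt rowLen at *
  split
  · subst r
    rw [if_pos ⟨hl, by omega⟩, baseEntry, height, if_neg (by omega)]
    simp
  · rw [gtEnt, dif_pos ⟨hr, by omega, hl, hl'⟩, basePt]
    congr 1 <;> simp only <;> omega

theorem isNearBase_spEnt_basePt_add {k β : ℕ} {w : GTIdx (4*k*β-1) → ℝ}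
    (hsupp : ∀ x, ¬IsFree (2*k*β) x → w x = 0)
    (hw : ∀ x, |w x| ≤ ((2*k*β : ℕ) + 2 : ℝ)⁻¹ / 4) :
    IsNearBase (2*k*β) (spEnt k β (basePt k β + w)) := by
  intro r l hr hr' hl hl'
  have h4 : 4*k*β = 2*(2*k*β) := by ring
  rw [spEnt_add, Pi.add_apply, Pi.add_apply, spEnt_basePt hr (by omega) hl hl',
    add_sub_cancel_left]
  refine ⟨abs_gtEnt_le (by positivity) hw r l, fun hrl => ?_⟩
  rw [gtEnt_eq_zero_of_add_le hsupp hl hrl, baseEntry, height, if_neg (by omega)]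
  simp

def constraintDefect (β : ℕ) (e : ℕ → ℕ → ℝ) (i : ℕ) : ℝ :=
  ∑ j ∈ Finset.Icc ((2*i-2)*β+1) ((2*i-1)*β), spRowTermR e j
    - ∑ j ∈ Finset.Icc ((2*i-1)*β+1) (2*i*β), spRowTermR e j

theorem constraintDefect_add (β : ℕ) (e e' : ℕ → ℕ → ℝ) (i : ℕ) :
    constraintDefect β (e + e') i = constraintDefect β e i + constraintDefect β e' i := by
  simp only [constraintDefect, spRowTermR_add, Finset.sum_add_distrib]
  ring

theorem constraintDefect_smul (β : ℕ) (a : ℝ) (e : ℕ → ℕ → ℝ) (i : ℕ) :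
    constraintDefect β (a • e) i = a * constraintDefect β e i := by
  simp only [constraintDefect, spRowTermR_smul, ← Finset.mul_sum, mul_sub]

def constraintMap (k β : ℕ) : (GTIdx (4*k*β-1) → ℝ) →ₗ[ℝ] (Fin k → ℝ) where
  toFun w i := constraintDefect β (gtEnt w) (i + 1)
  map_add' f g := by ext i; simp [gtEnt_add, constraintDefect_add]
  map_smul' a f := by ext i; simp [gtEnt_smul, constraintDefect_smul]

theorem constraintDefect_basePt {k β i : ℕ} (hi : 1 ≤ i) (hik : i ≤ k) :
    constraintDefect β (spEnt k β (basePt k β)) i = 0 := by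
  have h4 : 4*k*β = 2*(2*k*β) := by ring
  have h2i : 2*i*β ≤ 2*k*β := Nat.mul_le_mul_right _ (by omega)
  have h2i' : (2*i-1)*β ≤ 2*i*β := Nat.mul_le_mul_right _ (by omega)
  have hterm : ∀ j, 1 ≤ j → j ≤ 2*k*β → spRowTermR (spEnt k β (basePt k β)) j = 0 := by
    intro j hj hjn
    rw [spRowTermR_congr (e' := baseEntry (2*k*β)) fun r l hr hr' hl hl' =>
      spEnt_basePt hr (by omega) hl hl']
    exact spRowTermR_baseEntry ⟨k*β, by ring⟩ hj hjn
  rw [constraintDefect,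
    Finset.sum_eq_zero fun j hj => hterm j (by simp at hj; omega) (by simp at hj; omega),
    Finset.sum_eq_zero fun j hj => hterm j (by simp at hj; omega) (by simp at hj; omega),
    sub_zero]

theorem basePt_add_mem {k β : ℕ} {w : GTIdx (4*k*β-1) → ℝ}
    (hsupp : ∀ x, ¬IsFree (2*k*β) x → w x = 0)
    (hw : ∀ x, |w x| ≤ ((2*k*β : ℕ) + 2 : ℝ)⁻¹ / 4) (hcons : constraintMap k β w = 0) :
    basePt k β + w ∈ SpContPatterns k β := by
  have he := isNearBase_spEnt_basePt_add hsupp hw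
  have h4 : 4*k*β = 2*(2*k*β) := by ring
  refine ⟨fun r l hr hr' hl hl' => he.nonneg hr (by omega) hl hl',
    fun r l hr hr' hl hl' => he.antitone_row hr (by omega) hl hl',
    fun r l hr hr' hl hl' => he.le_succ_row hr (by omega) hl hl',
    fun r l hr hr' hl hl' hl'' => he.succ_succ_le hr (by omega) hl hl' hl'',
    fun i hi hik => sub_eq_zero.1 ?_⟩
  have hw_i : constraintDefect β (gtEnt w) i = 0 := by
    simpa [constraintMap, Nat.sub_add_cancel hi] using congrFun hcons ⟨i - 1, by omega⟩
  rw [← constraintDefect, spEnt_add, constraintDefect_add, constraintDefect_basePt hi hik, hw_i,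
    add_zero]

theorem card_isFree_two_mul (k β : ℕ) :
    Fintype.card {x : GTIdx (4*k*β-1) // IsFree (2*k*β) x} = k*β*(2*k*β+1) := by
  rw [card_isFree (by ring_nf), show 2*k*β*(2*k*β+1) = 2*(k*β*(2*k*β+1)) by ring,
    Nat.mul_div_cancel_left _ two_pos]

end SpContPatterns

open SpContPatterns

theorem symplectic_volume_positive_general (k β : ℕ) :
    0 < μH[((k*β*(2*k*β+1) - k : ℕ) : ℝ)] (SpContPatterns k β) := by
  let E := Function.ExtendByZero.linearMap ℝ
    (Subtype.val : {x : GTIdx (4*k*β-1) // IsFree (2*k*β) x} → GTIdx (4*k*β-1))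
  let Y := LinearMap.ker (constraintMap k β ∘ₗ E)
  have hd : k*β*(2*k*β+1) - k ≤ Module.finrank ℝ Y :=
    card_isFree_two_mul k β ▸ card_sub_le_finrank_ker _
  have hE : Function.Injective E :=
    Function.extend_injective Subtype.val_injective (0 : GTIdx (4*k*β-1) → ℝ)
  refine hausdorffMeasure_pos_of_affine_piece (φ := E ∘ₗ Y.subtype)
    (hE.comp Subtype.val_injective) hd (basePt k β) (ε := ((2*k*β : ℕ) + 2 : ℝ)⁻¹ / 4)
    (by positivity) fun y hy => basePt_add_mem ?_ ?_ y.2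
  · exact fun x hx => Function.extend_apply' _ _ _ fun ⟨a, ha⟩ => hx (ha ▸ a.2)
  · exact fun x => (Real.norm_eq_abs _ ▸ norm_le_pi_norm ((E ∘ₗ Y.subtype) y) x).trans hy.le

/-- Lemma 4.4 (positivity of the leading-order coefficient, symplectic case): the set of
constrained continuous `(4kβ)`-symplectic Gelfand–Tsetlin patterns with top row `⟨1^{2kβ}⟩`,
viewed inside `ℝ^{4k²β²}`, has positive `(kβ(2kβ+1)−k)`-dimensional Hausdorff measure. -/
theorem symplectic_volume_positive (k β : ℕ) (hk : 0 < k) (hβ : 0 < β) :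
    0 < μH[((k*β*(2*k*β+1) - k : ℕ) : ℝ)] (SpContPatterns k β) :=
  symplectic_volume_positive_general k β

end
end

section
/- Let s be a positive integer, m = ⌊(s+1)/2⌋, and let x₁ ≥ x₂ ≥ ⋯ ≥ x_m ≥ 0 be real numbers. Then vol_s(x₁,…,x_m) = ( ∏_{j=1}^{s} 1/(j−1)!! ) · det( x_{m+1−i}^{2(j−1)+δ} )_{i,j=1}^{m}, where δ = 1 if s is even and δ = 0 if s is odd. -/
/-!
Deleting the top row of a half pattern of length `s + 1` with top row `x` leaves a half pattern
of length `s` whose top row `y` ranges over the box `x_{k+1} ≤ y_k ≤ x_k` (with `x_{m+1} = 0`),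
so by Fubini `vol_{s+1}(x)` is the integral of `vol_s` over this box. Inductively
`vol_s = c_s · D_s` with `D_s` a determinant of even or odd powers of the `y_k`; as each `y_k`
occurs in a single row, integrating over the box integrates row by row and turns the entries
into `(x_k^{e+1} - x_{k+1}^{e+1}) / (e + 1)`. Summing the rows telescopes to `x_k^{e+1}` minus a
constant row, which vanishes when `s` is odd and, when `s` is even, is removed by expanding the
larger determinant `D_{s+1}(x)` along its column of ones; the factors `1/(e+1)` give `1/s‼`.
The sign `D_s ≥ 0`, needed to take the integral out of `ENNReal.ofReal`, is carried along the
induction.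
-/

noncomputable section
open MeasureTheory

/-- The entries of a continuous half pattern of length `s` whose rows `1,…,s−1` are encoded
by `f` and whose top row (row `s`, of length `⌈s/2⌉… = ⌊(s+1)/2⌋`) is given by `x`. -/
def hpEnt (s : ℕ) (x : ℕ → ℝ) (f : GTIdx (s-1) → ℝ) (r l : ℕ) : ℝ :=
  if r = s then (if 1 ≤ l ∧ l ≤ rowLen s then x l else 0) else gtEnt f r l

/-- The set of continuous half patterns of length `s` with all entries nonnegative and with
top row `x`, identified with the vectors of the entries of rows `1,…,s−1` (a subset of
`ℝ^d`, `d = Σ_{r=1}^{s−1} ⌈r/2⌉`). -/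
def HalfPatternSet (s : ℕ) (x : ℕ → ℝ) : Set (GTIdx (s-1) → ℝ) :=
  {f | (∀ r l, 1 ≤ r → r ≤ s → 1 ≤ l → l ≤ rowLen r → 0 ≤ hpEnt s x f r l) ∧
       (∀ r l, 1 ≤ r → r ≤ s → 1 ≤ l → l + 1 ≤ rowLen r →
         hpEnt s x f r (l+1) ≤ hpEnt s x f r l) ∧
       (∀ r l, 1 ≤ r → r + 1 ≤ s → 1 ≤ l → l ≤ rowLen r →
         hpEnt s x f r l ≤ hpEnt s x f (r+1) l) ∧
       (∀ r l, 1 ≤ r → r + 1 ≤ s → 1 ≤ l → l ≤ rowLen r → l + 1 ≤ rowLen (r+1) →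
         hpEnt s x f (r+1) (l+1) ≤ hpEnt s x f r l)}

/-- Double factorial, with `0‼ = 1‼ = 1` and `n‼ = n·(n−2)‼`. -/
def dfac : ℕ → ℕ
  | 0 => 1
  | 1 => 1
  | (n+2) => (n+2) * dfac n

open Matrix Set
open scoped Nat

namespace Matrix

variable {R : Type*} [CommRing R]

theorem det_of_rev_sub_telescope {m : ℕ} (v : ℕ → Fin m → R) :
    det (of fun i : Fin m => v (m - i) - v (m + 1 - i)) =
      det (of fun i : Fin m => v (m - i) - v (m + 1)) := by
  cases m with
  | zero => simp [det_isEmpty]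
  | succ m =>
    symm
    refine det_eq_of_forall_row_eq_smul_add_pred (fun _ => (1 : R)) (fun j => by simp)
      fun i j => ?_
    simp only [of_apply, Fin.val_succ, Fin.val_castSucc, Pi.sub_apply,
      show m + 1 + 1 - (i + 1) = m + 1 - i by omega]
    ring

theorem det_eq_of_col_zero_eq_one {n : ℕ} (A : Matrix (Fin (n + 1)) (Fin (n + 1)) R)
    (hA : ∀ i, A i 0 = 1) :
    A.det = det (of fun i j : Fin n => A i.succ j.succ - A 0 j.succ) := by
  rw [det_eq_of_forall_row_eq_smul_add_const
    (B := of fun i j => A i j - (if i = 0 then 0 else 1) * A 0 j) (fun i => if i = 0 then 0 else 1)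
    0 (by simp) fun i j => by simp only [of_apply]; split_ifs <;> simp_all]
  rw [det_succ_column_zero, Fin.sum_univ_succ, Finset.sum_eq_zero fun i _ => ?_]
  · simp [hA, Fin.succ_ne_zero, submatrix]
  · simp [hA, Fin.succ_ne_zero]

end Matrix

theorem integral_det_of_apply {n : Type*} [Fintype n] [DecidableEq n] (f : n → n → ℝ → ℝ)
    (hf : ∀ i j, Integrable (f i j)) :
    ∫ y : n → ℝ, (of fun i j => f i j (y i)).det = (of fun i j => ∫ t, f i j t).det := by
  simp_rw [← det_transpose (of _), det_apply, transpose_apply, of_apply]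
  refine (integral_finsetSum _ fun σ _ => ?_).trans (Finset.sum_congr rfl fun σ _ => ?_)
  · exact (Integrable.fintype_prod fun i => hf _ _).smul _
  · simp only [Units.smul_def, zsmul_eq_mul]
    rw [integral_const_mul, integral_fintype_prod_volume_eq_prod (𝕜 := ℝ) fun i => f i (σ i)]

theorem integral_indicator_pi_Icc_det {n : Type*} [Fintype n] [DecidableEq n] (σ : Equiv.Perm n)
    {a b : n → ℝ} (hab : ∀ i, a i ≤ b i) {g : n → ℝ → ℝ} (hg : ∀ j, Continuous (g j)) :
    ∫ y, (univ.pi fun i => Icc (a i) (b i)).indicator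
        (fun y => (of fun i j => g j (y (σ i))).det) y =
      (of fun i j => ∫ t in a (σ i)..b (σ i), g j t).det := by
  have hrows : ∀ y : n → ℝ, (univ.pi fun i => Icc (a i) (b i)).indicator
      (fun y => (of fun i j => g j (y (σ i))).det) y =
        Equiv.Perm.sign σ * (of fun i j => (Icc (a i) (b i)).indicator (g j) (y i)).det := by
    intro y
    by_cases hy : y ∈ univ.pi fun i => Icc (a i) (b i)
    · rw [indicator_of_mem hy, ← det_permute]
      congr 1
      ext i j
      simp [indicator_of_mem (hy (σ i) (mem_univ _))]
    · obtain ⟨i, -, hi⟩ := not_forall₂.1 hy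
      rw [indicator_of_notMem hy, det_eq_zero_of_row_eq_zero i fun j => indicator_of_notMem hi _,
        mul_zero]
  simp_rw [hrows]
  rw [integral_const_mul, integral_det_of_apply _ fun i j =>
    (hg j).integrableOn_Icc.integrable_indicator measurableSet_Icc, ← det_permute]
  congr 1
  ext i j
  simp [integral_indicator measurableSet_Icc, integral_Icc_eq_integral_Ioc,
    intervalIntegral.integral_of_le (hab _)]

theorem det_div_pow_sub_pow (m : ℕ) (w : ℕ → ℝ) (k : ℕ → ℕ) :
    det (of fun i j : Fin m =>
        (w (m - i) ^ (k j + 1) - w (m + 1 - i) ^ (k j + 1)) / ((k j : ℝ) + 1)) =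
      (∏ j ∈ Finset.range m, ((k j : ℝ) + 1))⁻¹ *
        det (of fun i j : Fin m => w (m - i) ^ (k j + 1) - w (m + 1) ^ (k j + 1)) := by
  simp_rw [div_eq_inv_mul]
  refine (det_mul_row (fun j : Fin m => ((k j : ℝ) + 1)⁻¹)
    (of fun i j : Fin m => w (m - i) ^ (k j + 1) - w (m + 1 - i) ^ (k j + 1))).trans ?_
  rw [Fin.prod_univ_eq_prod_range (fun j => ((k j : ℝ) + 1)⁻¹), Finset.prod_inv_distrib]
  congr 1
  exact det_of_rev_sub_telescope fun l j => w l ^ (k j + 1)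

-- The two sizes `m' = m` let this apply to `Fin ((n + 2) / 2)` and `Fin ((n + 3) / 2)`
-- without casts; likewise below.
theorem det_div_pow_sub_pow_of_eq {m' m : ℕ} (h : m' = m) {w : ℕ → ℝ} (hw : w (m + 1) = 0)
    (k : ℕ → ℕ) :
    det (of fun i j : Fin m' =>
        (w (m' - i) ^ (k j + 1) - w (m' + 1 - i) ^ (k j + 1)) / ((k j : ℝ) + 1)) =
      (∏ j ∈ Finset.range m', ((k j : ℝ) + 1))⁻¹ *
        det (of fun i j : Fin m => w (m - i) ^ (k j + 1)) := by
  subst h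
  simp [det_div_pow_sub_pow, hw]

theorem det_div_pow_sub_pow_of_eq_succ {m' m : ℕ} (h : m = m' + 1) (w : ℕ → ℝ) :
    det (of fun i j : Fin m' =>
        (w (m' - i) ^ (2 * j.1 + 1 + 1) - w (m' + 1 - i) ^ (2 * j.1 + 1 + 1)) /
          (((2 * j.1 + 1 : ℕ) : ℝ) + 1)) =
      (∏ j ∈ Finset.range m', (((2 * j + 1 : ℕ) : ℝ) + 1))⁻¹ *
        det (of fun i j : Fin m => w (m - i) ^ (2 * j.1)) := by
  subst h
  rw [det_div_pow_sub_pow m' w fun j => 2 * j + 1, det_eq_of_col_zero_eq_one _ fun i => by simp]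
  congr 2
  ext i j
  simp [Nat.mul_succ]

theorem dfac_eq_doubleFactorial : ∀ n, dfac n = n‼
  | 0 | 1 => rfl
  | n + 2 => by rw [dfac, Nat.doubleFactorial_add_two, dfac_eq_doubleFactorial n]

theorem dfac_two_mul_add_one (t : ℕ) :
    (dfac (2 * t + 1) : ℝ) = ∏ j ∈ Finset.range (t + 1), ((2 * j : ℕ) + 1 : ℝ) := by
  rw [dfac_eq_doubleFactorial, Nat.doubleFactorial_eq_prod_odd, Finset.prod_range_succ']
  push_cast
  ring_nf

theorem dfac_two_mul (t : ℕ) :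
    (dfac (2 * t) : ℝ) = ∏ j ∈ Finset.range t, ((2 * j + 1 : ℕ) + 1 : ℝ) := by
  rw [dfac_eq_doubleFactorial, Nat.doubleFactorial_eq_prod_even]
  push_cast
  ring_nf

def IsAdmissibleRow (m : ℕ) (v : ℕ → ℝ) : Prop :=
  (∀ l, 1 ≤ l → l ≤ m → 0 ≤ v l) ∧ (∀ l, 1 ≤ l → l + 1 ≤ m → v (l + 1) ≤ v l)

/-- The paper's `u ≺ v` for rows `u`, `v` of lengths `a`, `b`. -/
def Interlace (a b : ℕ) (u v : ℕ → ℝ) : Prop :=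
  (∀ l, 1 ≤ l → l ≤ a → u l ≤ v l) ∧ (∀ l, 1 ≤ l → l ≤ a → l + 1 ≤ b → v (l + 1) ≤ u l)

def IsHalfPattern (s : ℕ) (E : ℕ → ℕ → ℝ) : Prop :=
  (∀ r, 1 ≤ r → r ≤ s → IsAdmissibleRow (rowLen r) (E r)) ∧
    ∀ r, 1 ≤ r → r + 1 ≤ s → Interlace (rowLen r) (rowLen (r + 1)) (E r) (E (r + 1))

theorem mem_halfPatternSet_iff {s : ℕ} {x : ℕ → ℝ} {f : GTIdx (s - 1) → ℝ} :
    f ∈ HalfPatternSet s x ↔ IsHalfPattern s (hpEnt s x f) :=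
  ⟨fun ⟨h₁, h₂, h₃, h₄⟩ => ⟨fun r hr hrs => ⟨fun l => h₁ r l hr hrs, fun l => h₂ r l hr hrs⟩,
      fun r hr hrs => ⟨fun l => h₃ r l hr hrs, fun l => h₄ r l hr hrs⟩⟩,
    fun ⟨hrow, hint⟩ => ⟨fun r l hr hrs => (hrow r hr hrs).1 l,
      fun r l hr hrs => (hrow r hr hrs).2 l, fun r l hr hrs => (hint r hr hrs).1 l,
      fun r l hr hrs => (hint r hr hrs).2 l⟩⟩

theorem isHalfPattern_congr {s : ℕ} {E E' : ℕ → ℕ → ℝ} (h : ∀ r ≤ s, E r = E' r) :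
    IsHalfPattern s E ↔ IsHalfPattern s E' :=
  and_congr (forall₃_congr fun r _ hr => by rw [h r hr])
    (forall₃_congr fun r _ hr => by rw [h r (by omega), h (r + 1) hr])

theorem isHalfPattern_add_two_iff {s : ℕ} {E : ℕ → ℕ → ℝ} :
    IsHalfPattern (s + 2) E ↔ IsHalfPattern (s + 1) E ∧
      IsAdmissibleRow (rowLen (s + 2)) (E (s + 2)) ∧
      Interlace (rowLen (s + 1)) (rowLen (s + 2)) (E (s + 1)) (E (s + 2)) := by
  constructor
  · rintro ⟨hrow, hint⟩
    exact ⟨⟨fun r hr hrs => hrow r hr (by omega), fun r hr hrs => hint r hr (by omega)⟩,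
      hrow _ (by omega) le_rfl, hint _ (by omega) le_rfl⟩
  · rintro ⟨⟨hrow, hint⟩, htop, hlast⟩
    refine ⟨fun r hr hrs => ?_, fun r hr hrs => ?_⟩
    · obtain hrs | rfl := Nat.lt_or_eq_of_le hrs
      exacts [hrow r hr (by omega), htop]
    · obtain hrs | hrs := Nat.lt_or_eq_of_le hrs
      · exact hint r hr (by omega)
      · obtain rfl : r = s + 1 := by omega
        exact hlast

def rowRestrict (m : ℕ) (x : ℕ → ℝ) (l : ℕ) : ℝ := if 1 ≤ l ∧ l ≤ m then x l else 0

theorem isAdmissibleRow_rowRestrict {m : ℕ} {x : ℕ → ℝ} (hx : IsAdmissibleRow m x) :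
    IsAdmissibleRow m (rowRestrict m x) :=
  ⟨fun l h₁ h₂ => by simpa [rowRestrict, h₁, h₂] using hx.1 l h₁ h₂,
    fun l h₁ h₂ => by simpa [rowRestrict, h₁, h₂, show l ≤ m by omega] using hx.2 l h₁ h₂⟩

theorem rowRestrict_succ_le {m : ℕ} {x : ℕ → ℝ} (hx : IsAdmissibleRow m x) {l : ℕ}
    (hl : 1 ≤ l) :
    rowRestrict m x (l + 1) ≤ rowRestrict m x l := by
  unfold rowRestrict
  split_ifs with h₁ h₂ h₂
  · exact hx.2 l hl h₁.2
  · omega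
  · exact hx.1 l hl h₂.2
  · rfl

def extRow {m : ℕ} (y : Fin m → ℝ) (l : ℕ) : ℝ :=
  if h : 1 ≤ l ∧ l ≤ m then y ⟨l - 1, by omega⟩ else 0

theorem rowRestrict_extRow {m : ℕ} (y : Fin m → ℝ) : rowRestrict m (extRow y) = extRow y := by
  ext l
  by_cases h : 1 ≤ l ∧ l ≤ m <;> simp [rowRestrict, extRow, h]

theorem extRow_val_add_one {m : ℕ} (y : Fin m → ℝ) (k : Fin m) :
    extRow y (k + 1) = y k := by
  simp [extRow, Nat.succ_le_of_lt k.2]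

theorem continuous_extRow_apply {m : ℕ} (l : ℕ) :
    Continuous fun y : Fin m → ℝ => extRow y l := by
  unfold extRow
  split_ifs
  exacts [continuous_apply _, continuous_const]

-- `y : Fin m → ℝ` is indexed from `0`, rows `w : ℕ → ℝ` from `1`: `w (k + 2) ≤ y k ≤ w (k + 1)`
-- says that `y` interlaces below `w`.
def interlaceBox (m : ℕ) (w : ℕ → ℝ) : Set (Fin m → ℝ) :=
  univ.pi fun k => Icc (w (k + 2)) (w (k + 1))

theorem mem_interlaceBox_iff {m' m : ℕ} {x : ℕ → ℝ} (hx : ∀ l, 1 ≤ l → l ≤ m → 0 ≤ x l)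
    {y : Fin m' → ℝ} :
    y ∈ interlaceBox m' (rowRestrict m x) ↔
      Interlace m' m (extRow y) (rowRestrict m x) ∧ ∀ k, 0 ≤ y k := by
  have hw : ∀ l, 0 ≤ rowRestrict m x l := fun l => by
    unfold rowRestrict; split_ifs with h; exacts [hx l h.1 h.2, le_rfl]
  have hl : ∀ l, 1 ≤ l → l ≤ m' → ∃ k : Fin m', l = k + 1 := fun l h₁ h₂ =>
    ⟨⟨l - 1, by omega⟩, by simp only; omega⟩
  simp only [interlaceBox, mem_univ_pi, mem_Icc]
  constructor
  · intro hb
    refine ⟨⟨fun l h₁ h₂ => ?_, fun l h₁ h₂ _ => ?_⟩, fun k => (hw _).trans (hb k).1⟩ <;>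
      obtain ⟨k, rfl⟩ := hl l h₁ h₂ <;> rw [extRow_val_add_one]
    exacts [(hb k).2, (hb k).1]
  · rintro ⟨⟨hup, hlow⟩, hnn⟩ k
    refine ⟨?_, by simpa only [extRow_val_add_one] using hup (k + 1) (by omega) k.2⟩
    by_cases hk : k.1 + 2 ≤ m
    · simpa only [extRow_val_add_one] using hlow (k + 1) (by omega) k.2 hk
    · simpa [rowRestrict, hk] using hnn k

theorem isAdmissibleRow_extRow {m' m : ℕ} {x : ℕ → ℝ} (hx : ∀ l, 1 ≤ l → l ≤ m → 0 ≤ x l)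
    {y : Fin m' → ℝ} (hy : y ∈ interlaceBox m' (rowRestrict m x)) :
    IsAdmissibleRow m' (extRow y) := by
  have hb := mem_univ_pi.1 hy
  have hnn := ((mem_interlaceBox_iff hx).1 hy).2
  refine ⟨fun l h₁ h₂ => ?_, fun l h₁ h₂ => ?_⟩
  · simpa [extRow, h₁, h₂] using hnn ⟨l - 1, by omega⟩
  · obtain ⟨k, rfl⟩ : ∃ k, l = k + 1 := ⟨l - 1, by omega⟩
    calc extRow y (k + 1 + 1)
        = y ⟨k + 1, by omega⟩ := extRow_val_add_one y ⟨k + 1, by omega⟩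
      _ ≤ rowRestrict m x (k + 2) := (hb ⟨k + 1, by omega⟩).2
      _ ≤ y ⟨k, by omega⟩ := (hb ⟨k, by omega⟩).1
      _ = extRow y (k + 1) := (extRow_val_add_one y ⟨k, by omega⟩).symm

def splitTopRow (n : ℕ) : GTIdx (n + 1) ≃ Fin ((n + 2) / 2) ⊕ GTIdx n where
  toFun q := if h : q.1.1 < n then .inr ⟨⟨q.1, h⟩, q.2⟩
    else .inl ⟨q.2, by have := q.1.2; have := q.2.2; omega⟩
  invFun := Sum.elim (fun l => ⟨Fin.last n, l⟩) fun q => ⟨q.1.castSucc, q.2⟩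
  left_inv := by
    rintro ⟨⟨i, hi⟩, l⟩
    by_cases h : i < n
    · simp [h]
    · obtain rfl : i = n := by omega
      simp [Fin.last]
  right_inv := by
    rintro (l | ⟨i, l⟩) <;> simp

def appendTopRow (n : ℕ) : (Fin ((n + 2) / 2) → ℝ) × (GTIdx n → ℝ) ≃ᵐ (GTIdx (n + 1) → ℝ) :=
  (MeasurableEquiv.sumPiEquivProdPi fun _ => ℝ).symm.trans
    (MeasurableEquiv.piCongrLeft (fun _ => ℝ) (splitTopRow n).symm)

theorem appendTopRow_apply (n : ℕ) (y : Fin ((n + 2) / 2) → ℝ) (g : GTIdx n → ℝ)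
    (q : GTIdx (n + 1)) :
    appendTopRow n (y, g) q = Sum.elim y g (splitTopRow n q) := by
  simp only [appendTopRow, MeasurableEquiv.trans_apply, MeasurableEquiv.coe_piCongrLeft,
    Equiv.piCongrLeft_apply_eq_cast, MeasurableEquiv.coe_sumPiEquivProdPi_symm, Equiv.symm_symm,
    cast_eq]
  rcases splitTopRow n q with l | p <;> rfl

theorem measurePreserving_appendTopRow (n : ℕ) :
    MeasurePreserving (appendTopRow n) (volume.prod volume) volume :=
  (volume_measurePreserving_piCongrLeft (fun _ => ℝ) (splitTopRow n).symm).comp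
    (volume_measurePreserving_sumPiEquivProdPi_symm fun _ => ℝ)

theorem gtEnt_appendTopRow (n : ℕ) (y : Fin ((n + 2) / 2) → ℝ) (g : GTIdx n → ℝ) (r : ℕ) :
    gtEnt (appendTopRow n (y, g)) r = if r = n + 1 then extRow y else gtEnt g r := by
  ext l
  by_cases hr : r = n + 1
  · subst hr
    rw [if_pos rfl]
    by_cases hl : 1 ≤ l ∧ l ≤ (n + 2) / 2
    · rw [gtEnt, dif_pos (by omega), extRow, dif_pos hl]
      simp [appendTopRow_apply, splitTopRow]
    · rw [gtEnt, dif_neg (by omega), extRow, dif_neg hl]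
  · rw [if_neg hr]
    by_cases h : 1 ≤ r ∧ r ≤ n ∧ 1 ≤ l ∧ l ≤ (r + 1) / 2
    · rw [gtEnt, dif_pos (by omega), gtEnt, dif_pos h]
      simp [appendTopRow_apply, splitTopRow, show r - 1 < n by omega]
    · rw [gtEnt, dif_neg (by omega), gtEnt, dif_neg h]

theorem hpEnt_self (s : ℕ) (x : ℕ → ℝ) (f : GTIdx (s - 1) → ℝ) :
    hpEnt s x f s = rowRestrict (rowLen s) x := by
  ext l
  simp [hpEnt, rowRestrict]

theorem hpEnt_of_ne {s r : ℕ} (x : ℕ → ℝ) (f : GTIdx (s - 1) → ℝ) (h : r ≠ s) :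
    hpEnt s x f r = gtEnt f r := by
  ext l
  simp [hpEnt, h]

theorem appendTopRow_mem_halfPatternSet_iff {n : ℕ} {x : ℕ → ℝ}
    (hx : IsAdmissibleRow (rowLen (n + 2)) x) (y : Fin ((n + 2) / 2) → ℝ) (g : GTIdx n → ℝ) :
    appendTopRow n (y, g) ∈ HalfPatternSet (n + 2) x ↔
      y ∈ interlaceBox ((n + 2) / 2) (rowRestrict (rowLen (n + 2)) x) ∧
        g ∈ HalfPatternSet (n + 1) (extRow y) := by
  have hlen : rowLen (n + 1) = (n + 2) / 2 := rfl
  have hrows : ∀ r ≤ n + 1,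
      hpEnt (n + 2) x (appendTopRow n (y, g)) r = hpEnt (n + 1) (extRow y) g r := by
    intro r hr
    rw [hpEnt_of_ne _ _ (by omega), gtEnt_appendTopRow]
    split_ifs with h
    · rw [h, hpEnt_self, hlen, rowRestrict_extRow]
    · rw [hpEnt_of_ne _ _ h]
  have hy : g ∈ HalfPatternSet (n + 1) (extRow y) → ∀ k, 0 ≤ y k := fun hg k => by
    have hrow := (mem_halfPatternSet_iff.1 hg).1 (n + 1) (by omega) le_rfl
    rw [hpEnt_self, hlen, rowRestrict_extRow] at hrow
    simpa only [extRow_val_add_one] using hrow.1 (k + 1) (by omega) k.2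
  rw [mem_halfPatternSet_iff, isHalfPattern_add_two_iff, isHalfPattern_congr hrows,
    ← mem_halfPatternSet_iff, hrows (n + 1) le_rfl, hpEnt_self, hpEnt_self, hlen,
    rowRestrict_extRow, mem_interlaceBox_iff hx.1]
  have := isAdmissibleRow_rowRestrict hx
  tauto

theorem continuous_hpEnt (s : ℕ) (x : ℕ → ℝ) (r l : ℕ) :
    Continuous fun f : GTIdx (s - 1) → ℝ => hpEnt s x f r l := by
  unfold hpEnt gtEnt
  split_ifs
  exacts [continuous_const, continuous_const, continuous_apply _, continuous_const]

theorem isClosed_halfPatternSet (s : ℕ) (x : ℕ → ℝ) : IsClosed (HalfPatternSet s x) := by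
  simp only [HalfPatternSet, ofPred_and, ofPred_forall]
  refine .inter ?_ (.inter ?_ (.inter ?_ ?_)) <;> repeat refine isClosed_iInter fun _ => ?_
  all_goals refine isClosed_le ?_ (continuous_hpEnt ..)
  all_goals first | exact continuous_const | exact continuous_hpEnt ..

theorem volume_halfPatternSet_add_two_eq_lintegral (n : ℕ) {x : ℕ → ℝ}
    (hx : IsAdmissibleRow (rowLen (n + 2)) x) :
    volume (HalfPatternSet (n + 2) x) =
      ∫⁻ y, (interlaceBox ((n + 2) / 2) (rowRestrict (rowLen (n + 2)) x)).indicator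
        (fun y => volume (HalfPatternSet (n + 1) (extRow y))) y := by
  have hmeas := (isClosed_halfPatternSet (n + 2) x).measurableSet
  rw [← (measurePreserving_appendTopRow n).measure_preimage hmeas.nullMeasurableSet,
    Measure.prod_apply ((appendTopRow n).measurable hmeas)]
  refine lintegral_congr fun y => ?_
  simp only [preimage, mem_ofPred_eq, appendTopRow_mem_halfPatternSet_iff hx, indicator]
  split_ifs with hy <;> simp [hy]

def halfPatternDet (s : ℕ) (x : ℕ → ℝ) : ℝ :=
  (of fun i j : Fin ((s + 1) / 2) =>
    x ((s + 1) / 2 - i.1) ^ (2 * j.1 + if s % 2 = 0 then 1 else 0)).det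

theorem halfPatternDet_rowRestrict (s : ℕ) (x : ℕ → ℝ) :
    halfPatternDet s (rowRestrict (rowLen s) x) = halfPatternDet s x := by
  unfold halfPatternDet
  congr 2
  ext i j
  rw [rowRestrict, if_pos ⟨by omega, by unfold rowLen; omega⟩]

theorem continuous_halfPatternDet_extRow (s : ℕ) {m : ℕ} :
    Continuous fun y : Fin m → ℝ => halfPatternDet s (extRow y) :=
  Continuous.matrix_det (continuous_matrix fun _ _ => (continuous_extRow_apply _).pow _)

theorem integral_indicator_halfPatternDet (n : ℕ) {w : ℕ → ℝ}
    (hw : ∀ k, k < (n + 2) / 2 → w (k + 2) ≤ w (k + 1)) (hw₀ : w ((n + 3) / 2 + 1) = 0) :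
    ∫ y, (interlaceBox ((n + 2) / 2) w).indicator
        (fun y => halfPatternDet (n + 1) (extRow y)) y =
      (dfac (n + 1) : ℝ)⁻¹ * halfPatternDet (n + 2) w := by
  set m' := (n + 2) / 2
  have hD : ∀ y : Fin m' → ℝ, halfPatternDet (n + 1) (extRow y) =
      det (of fun i j : Fin m' =>
        y (Fin.revPerm i) ^ (2 * j.1 + if (n + 1) % 2 = 0 then 1 else 0)) := fun y => by
    simp only [halfPatternDet]
    congr 2
    ext i j
    rw [← extRow_val_add_one y (Fin.revPerm i)]
    simp only [Fin.revPerm_apply, Fin.val_rev]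
    congr 2
    omega
  simp only [hD, interlaceBox]
  rw [integral_indicator_pi_Icc_det Fin.revPerm (a := fun k => w (k + 2))
    (b := fun k => w (k + 1)) (g := fun j t => t ^ (2 * j.1 + if (n + 1) % 2 = 0 then 1 else 0))
    (fun k => hw k k.2) fun j => continuous_pow _]
  have h₁ : ∀ i : Fin m', (Fin.revPerm i : ℕ) + 1 = m' - i := fun i => by
    simp only [Fin.revPerm_apply, Fin.val_rev]; omega
  have h₂ : ∀ i : Fin m', (Fin.revPerm i : ℕ) + 2 = m' + 1 - i := fun i => by
    simp only [Fin.revPerm_apply, Fin.val_rev]; omega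
  simp only [integral_pow, h₁, h₂]
  rcases Nat.mod_two_eq_zero_or_one n with hn | hn
  · obtain ⟨t, rfl⟩ : ∃ t, n = 2 * t := ⟨n / 2, by omega⟩
    rw [halfPatternDet, if_neg (by omega), if_pos (by omega)]
    simp only [add_zero]
    rw [det_div_pow_sub_pow_of_eq (m := (2 * t + 3) / 2) (by omega) hw₀ fun j => 2 * j,
      dfac_two_mul_add_one, show m' = t + 1 by omega]
  · obtain ⟨t, rfl⟩ : ∃ t, n = 2 * t + 1 := ⟨n / 2, by omega⟩
    rw [halfPatternDet, if_pos (by omega), if_neg (by omega)]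
    simp only [add_zero]
    rw [det_div_pow_sub_pow_of_eq_succ (m := (2 * t + 4) / 2) (by omega),
      show 2 * t + 1 + 1 = 2 * (t + 1) by ring, dfac_two_mul, show m' = t + 1 by omega]

def halfPatternConst (s : ℕ) : ℝ := ∏ j ∈ Finset.Icc 1 s, (dfac (j - 1) : ℝ)⁻¹

theorem halfPatternConst_add_one (n : ℕ) :
    halfPatternConst (n + 1) = halfPatternConst n * (dfac n : ℝ)⁻¹ := by
  rw [halfPatternConst, Finset.prod_Icc_succ_top (by omega), Nat.add_sub_cancel]
  rfl

theorem halfPatternConst_nonneg (s : ℕ) : 0 ≤ halfPatternConst s :=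
  Finset.prod_nonneg fun _ _ => by positivity

theorem halfPatternSet_one {x : ℕ → ℝ} (hx : IsAdmissibleRow 1 x) : HalfPatternSet 1 x = univ :=
  eq_univ_of_forall fun f => mem_halfPatternSet_iff.2
    ⟨fun r h₁ h₂ => by
      obtain rfl : r = 1 := by omega
      rw [hpEnt_self]
      exact isAdmissibleRow_rowRestrict hx,
    fun r h₁ h₂ => by omega⟩

theorem volume_halfPatternSet_one {x : ℕ → ℝ} (hx : IsAdmissibleRow 1 x) :
    volume (HalfPatternSet 1 x) = ENNReal.ofReal (halfPatternConst 1 * halfPatternDet 1 x) := by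
  have : IsEmpty (GTIdx 0) := ⟨fun q => q.1.elim0⟩
  simp [halfPatternSet_one hx, volume_pi, halfPatternConst, halfPatternDet, dfac]

theorem volume_halfPatternSet_add_two_eq (n : ℕ) {x : ℕ → ℝ}
    (hx : IsAdmissibleRow (rowLen (n + 2)) x)
    (ih : ∀ v, IsAdmissibleRow (rowLen (n + 1)) v →
      volume (HalfPatternSet (n + 1) v) =
        ENNReal.ofReal (halfPatternConst (n + 1) * halfPatternDet (n + 1) v) ∧
      0 ≤ halfPatternDet (n + 1) v) :
    volume (HalfPatternSet (n + 2) x) =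
        ENNReal.ofReal (halfPatternConst (n + 2) * halfPatternDet (n + 2) x) ∧
      0 ≤ halfPatternDet (n + 2) x := by
  set B := interlaceBox ((n + 2) / 2) (rowRestrict (rowLen (n + 2)) x)
  set F := fun y : Fin ((n + 2) / 2) → ℝ => halfPatternDet (n + 1) (extRow y)
  have hB : ∀ y ∈ B, IsAdmissibleRow (rowLen (n + 1)) (extRow y) := fun y hy =>
    isAdmissibleRow_extRow hx.1 hy
  have hF : ∀ y ∈ B, 0 ≤ F y := fun y hy => (ih _ (hB y hy)).2
  have hint : ∫ y, B.indicator F y = (dfac (n + 1) : ℝ)⁻¹ * halfPatternDet (n + 2) x := by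
    rw [integral_indicator_halfPatternDet n (fun k _ => rowRestrict_succ_le hx (by omega))
      (by simp [rowRestrict, rowLen]), halfPatternDet_rowRestrict]
  have hD : 0 ≤ halfPatternDet (n + 2) x := by
    have h := integral_nonneg (μ := volume) (indicator_nonneg hF)
    rwa [hint, mul_nonneg_iff_of_pos_left (by simp [dfac_eq_doubleFactorial]; positivity)] at h
  refine ⟨?_, hD⟩
  have hFint : Integrable (B.indicator F) :=
    ((continuous_halfPatternDet_extRow _).continuousOn.integrableOn_compact
      (isCompact_univ_pi fun _ => isCompact_Icc)).integrable_indicator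
      (MeasurableSet.univ_pi fun _ => measurableSet_Icc)
  calc volume (HalfPatternSet (n + 2) x)
      = ∫⁻ y, B.indicator (fun y => volume (HalfPatternSet (n + 1) (extRow y))) y :=
        volume_halfPatternSet_add_two_eq_lintegral n hx
    _ = ∫⁻ y, ENNReal.ofReal (halfPatternConst (n + 1) * B.indicator F y) := by
        refine lintegral_congr fun y => ?_
        by_cases hy : y ∈ B
        · simp [hy, (ih _ (hB y hy)).1, F]
        · simp [hy]
    _ = ENNReal.ofReal (∫ y, halfPatternConst (n + 1) * B.indicator F y) :=
        (ofReal_integral_eq_lintegral_ofReal (hFint.const_mul _) (ae_of_all _ fun y =>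
          mul_nonneg (halfPatternConst_nonneg _) (indicator_nonneg hF y))).symm
    _ = ENNReal.ofReal (halfPatternConst (n + 2) * halfPatternDet (n + 2) x) := by
        rw [integral_const_mul, hint, halfPatternConst_add_one (n + 1), mul_assoc]

theorem volume_halfPatternSet_eq (n : ℕ) {x : ℕ → ℝ}
    (hx : IsAdmissibleRow (rowLen (n + 1)) x) :
    volume (HalfPatternSet (n + 1) x) =
        ENNReal.ofReal (halfPatternConst (n + 1) * halfPatternDet (n + 1) x) ∧
      0 ≤ halfPatternDet (n + 1) x := by
  induction n generalizing x with
  | zero => exact ⟨volume_halfPatternSet_one hx, by simp [halfPatternDet]⟩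
  | succ n ih => exact volume_halfPatternSet_add_two_eq n hx fun v hv => ih hv

/-- Lemma 4.9: the Lebesgue volume of the continuous half patterns of length `s` with
nonnegative entries and top row `x₁ ≥ ⋯ ≥ x_m ≥ 0` (`m = ⌊(s+1)/2⌋`) equals
`(∏_{j=1}^s 1/(j−1)‼) · det(x_{m+1−i}^{2(j−1)+𝟙(s even)})_{i,j=1}^m`. -/
theorem volume_half_pattern_det (s : ℕ) (hs : 0 < s) (x : ℕ → ℝ)
    (hnn : ∀ l, 1 ≤ l → l ≤ (s+1)/2 → 0 ≤ x l)
    (hmono : ∀ l, 1 ≤ l → l + 1 ≤ (s+1)/2 → x (l+1) ≤ x l) :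
    volume (HalfPatternSet s x) =
      ENNReal.ofReal ((∏ j ∈ Finset.Icc 1 s, ((dfac (j-1) : ℝ))⁻¹) *
        (Matrix.of fun i j : Fin ((s+1)/2) =>
          x ((s+1)/2 - i.1) ^ (2 * j.1 + (if s % 2 = 0 then 1 else 0))).det) := by
  obtain ⟨n, rfl⟩ : ∃ n, s = n + 1 := ⟨s - 1, by omega⟩
  exact (volume_halfPatternSet_eq n ⟨hnn, hmono⟩).1
end
end
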